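/- arXiv:2411.02923 — 2 statements merged into one kernel-verified Lean document; each statement's English description precedes it below -/
import Mathlib

section
/- Let ℓ, T > 0. Let k₁ : [0,ℓ] → ℝ be continuous with k₁(x) ≥ C₀ for some C₀ > 0; let φ : [0,ℓ] → ℝ; let λ, λ_w, Λ : ℝ → ℝ with λ continuous and λ(η) ≥ c₁ > 0 for all η, and with b := λ_w/λ continuously differentiable; let Q̂ : [0,ℓ] × [0,T] → ℝ be continuous and q₀, qℓ : [0,T] → ℝ. Suppose p₀, s₀ : [0,ℓ] × [0,T] → ℝ are such that, for each t ∈ [0,T], p₀(·,t) and s₀(·,t) are continuously differentiable on [0,ℓ], the maps x ↦ λ(s₀(x,t)) k₁(x) ∂_x p₀(x,t) and x ↦ Λ(s₀(x,t)) k₁(x) ∂_x s₀(x,t) are differentiable in x, ∂_t s₀ exists, and: (i) ∂_x(λ(s₀) k₁ ∂_x p₀)(x,t) = Q̂(x,t) for all x ∈ [0,ℓ], with p₀(0,t) = q₀(t) and p₀(ℓ,t) = qℓ(t); (ii) φ(x) ∂_t s₀(x,t) = ∂_x(Λ(s₀) k₁ ∂_x s₀ + λ_w(s₀) k₁ ∂_x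 p₀)(x,t) - b(s₀(x,t)) Q̂(x,t) for all x ∈ (0,ℓ). Then for all (x₁,t) ∈ (0,ℓ) × [0,T]: φ(x₁) ∂_t s₀(x₁,t) = ∂_x(Λ(s₀) k₁ ∂_x s₀)(x₁,t) + a(x₁,t) ∂_x s₀(x₁,t), where a(x₁,t) := b'(s₀(x₁,t)) · ( ∫_0^{x₁} Q̂(ς,t) dς + ( qℓ(t) - q₀(t) - ∫_0^ℓ (1/(λ(s₀(η,t)) k₁(η))) (∫_0^η Q̂(ς,t) dς) dη ) / ( ∫_0^ℓ dη/(λ(s₀(η,t)) k₁(η)) ) ). -/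
/-!
The pressure equation says that the flux `F = λ(s₀) k₁ ∂ₓp₀` has derivative `Q̂`, so
`F(x) = F(0) + ∫₀ˣ Q̂`. Dividing by `λ(s₀) k₁` and integrating over `(0, ℓ)` turns the Dirichlet
data `p₀(ℓ) - p₀(0)` into a linear equation for `F(0)`, so that `a = b'(s₀) F`. Since
`λ_w(s₀) k₁ ∂ₓp₀ = b(s₀) F`, the product rule for `(b(s₀) F)'` removes the pressure from the
saturation equation, the two `b(s₀) Q̂` terms cancel and `b'(s₀) ∂ₓs₀ F = a ∂ₓs₀` remains.
-/

open Set MeasureTheory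

theorem integral_eq_sub_of_hasDerivWithinAt_Icc {E : Type*} [NormedAddCommGroup E]
    [NormedSpace ℝ E] [CompleteSpace E] {f f' : ℝ → E} {a b : ℝ} (hab : a ≤ b)
    (hf : ∀ x ∈ Icc a b, HasDerivWithinAt f (f' x) (Icc a b) x)
    (hint : IntervalIntegrable f' volume a b) :
    ∫ y in a..b, f' y = f b - f a :=
  intervalIntegral.integral_eq_sub_of_hasDerivAt_of_le hab
    (fun x hx => (hf x hx).continuousWithinAt)
    (fun x hx => (hf x (Ioo_subset_Icc_self hx)).hasDerivAt (Icc_mem_nhds hx.1 hx.2)) hint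

section Flux

variable {a b : ℝ} {κ p p' f : ℝ → ℝ}

theorem flux_eq_flux_left_add_integral (hflux : ∀ x ∈ Icc a b,
      HasDerivWithinAt (fun y => κ y * p' y) (f x) (Icc a b) x)
    (hf : ContinuousOn f (Icc a b)) {x : ℝ} (hx : x ∈ Icc a b) :
    κ x * p' x = κ a * p' a + ∫ ς in a..x, f ς := by
  have hsub : Icc a x ⊆ Icc a b := Icc_subset_Icc le_rfl hx.2
  rw [integral_eq_sub_of_hasDerivWithinAt_Icc hx.1
    (fun y hy => (hflux y (hsub hy)).mono hsub)
    ((hf.mono hsub).intervalIntegrable_of_Icc hx.1)]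
  ring

theorem flux_eq_of_hasDerivWithinAt (hab : a < b) (hκc : ContinuousOn κ (Icc a b))
    (hκ : ∀ x ∈ Icc a b, 0 < κ x) (hp : ∀ x ∈ Icc a b, HasDerivWithinAt p (p' x) (Icc a b) x)
    (hflux : ∀ x ∈ Icc a b, HasDerivWithinAt (fun y => κ y * p' y) (f x) (Icc a b) x)
    (hf : ContinuousOn f (Icc a b)) {x : ℝ} (hx : x ∈ Icc a b) :
    κ x * p' x = (∫ ς in a..x, f ς) +
      (p b - p a - ∫ η in a..b, 1 / κ η * ∫ ς in a..η, f ς) / ∫ η in a..b, 1 / κ η := by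
  have hκne : ∀ η ∈ Icc a b, κ η ≠ 0 := fun η hη => (hκ η hη).ne'
  have hinvc : ContinuousOn (fun η => 1 / κ η) (Icc a b) :=
    continuousOn_const.div hκc hκne
  have hfluxc : ContinuousOn (fun y => κ y * p' y) (Icc a b) :=
    fun y hy => (hflux y hy).continuousWithinAt
  have hp'_eq : EqOn p' (fun η => 1 / κ η * (κ η * p' η)) (Icc a b) := fun η hη => by
    field_simp [hκne η hη]
  have hint_inv : IntervalIntegrable (fun η => 1 / κ η) volume a b :=
    hinvc.intervalIntegrable_of_Icc hab.le
  have hprim : ContinuousOn (fun η => ∫ ς in a..η, f ς) (Icc a b) :=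
    (hfluxc.sub continuousOn_const).congr fun η hη => by
      show _ = κ η * p' η - κ a * p' a
      rw [flux_eq_flux_left_add_integral hflux hf hη, add_sub_cancel_left]
  have hint_inv_mul : IntervalIntegrable (fun η => 1 / κ η * ∫ ς in a..η, f ς) volume a b :=
    (hinvc.mul hprim).intervalIntegrable_of_Icc hab.le
  -- integrating `p' = (κ a p' a + ∫ₐ^η f) / κ` over `[a, b]` determines the flux at `a`
  have hboundary : p b - p a =
      κ a * p' a * (∫ η in a..b, 1 / κ η) + ∫ η in a..b, 1 / κ η * ∫ ς in a..η, f ς := by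
    rw [← integral_eq_sub_of_hasDerivWithinAt_Icc hab.le hp
        (((hinvc.mul hfluxc).congr hp'_eq).intervalIntegrable_of_Icc hab.le),
      ← intervalIntegral.integral_const_mul, ← intervalIntegral.integral_add
        (hint_inv.const_mul _) hint_inv_mul]
    refine intervalIntegral.integral_congr fun η hη => ?_
    rw [uIcc_of_le hab.le] at hη
    rw [hp'_eq hη]
    dsimp only
    rw [flux_eq_flux_left_add_integral hflux hf hη]
    ring
  have hI : 0 < ∫ η in a..b, 1 / κ η :=
    intervalIntegral.intervalIntegral_pos_of_pos_on hint_inv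
      (fun η hη => one_div_pos.mpr (hκ η (Ioo_subset_Icc_self hη))) hab
  rw [flux_eq_flux_left_add_integral hflux hf hx, hboundary]
  field_simp
  ring

end Flux

theorem HasDerivWithinAt.of_add_comp_mul {D s F b : ℝ → ℝ} {S : Set ℝ} {x G' s' F' b' : ℝ}
    (hG : HasDerivWithinAt (fun y => D y + b (s y) * F y) G' S x)
    (hs : HasDerivWithinAt s s' S x) (hb : HasDerivAt b b' (s x))
    (hF : HasDerivWithinAt F F' S x) :
    HasDerivWithinAt D (G' - (b' * s' * F x + b (s x) * F')) S x := by
  have h := hG.sub ((hb.comp_hasDerivWithinAt x hs).mul hF)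
  rwa [show (fun y => D y + b (s y) * F y) - (b ∘ s) * F = D by ext y; simp] at h

theorem statement7_general (ℓ T : ℝ) (hl : 0 < ℓ)
    (k₁ : ℝ → ℝ) (hk₁c : ContinuousOn k₁ (Icc 0 ℓ))
    (C₀ : ℝ) (hC₀ : 0 < C₀) (hk₁ : ∀ x ∈ Icc (0:ℝ) ℓ, C₀ ≤ k₁ x)
    (φ : ℝ → ℝ)
    (lam lw Lam : ℝ → ℝ) (hlam : Continuous lam)
    (c₁ : ℝ) (hc₁ : 0 < c₁) (hlampos : ∀ η : ℝ, c₁ ≤ lam η)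
    (b : ℝ → ℝ) (hbdef : ∀ s : ℝ, b s = lw s / lam s) (hb : ContDiff ℝ 1 b)
    (Qh : ℝ → ℝ → ℝ)
    (hQh : ContinuousOn (fun q : ℝ × ℝ => Qh q.1 q.2) (Icc 0 ℓ ×ˢ Icc 0 T))
    (q₀ qℓ : ℝ → ℝ)
    (p₀ s₀ px sx st : ℝ → ℝ → ℝ)
    (hpx : ∀ t ∈ Icc (0:ℝ) T, ∀ x ∈ Icc (0:ℝ) ℓ,
      HasDerivWithinAt (fun y => p₀ y t) (px x t) (Icc 0 ℓ) x)
    (hsx : ∀ t ∈ Icc (0:ℝ) T, ∀ x ∈ Icc (0:ℝ) ℓ,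
      HasDerivWithinAt (fun y => s₀ y t) (sx x t) (Icc 0 ℓ) x)
    (hell : ∀ t ∈ Icc (0:ℝ) T, ∀ x ∈ Icc (0:ℝ) ℓ,
      HasDerivWithinAt (fun y => lam (s₀ y t) * k₁ y * px y t) (Qh x t) (Icc 0 ℓ) x)
    (hbc0 : ∀ t ∈ Icc (0:ℝ) T, p₀ 0 t = q₀ t)
    (hbcl : ∀ t ∈ Icc (0:ℝ) T, p₀ ℓ t = qℓ t)
    (Gx : ℝ → ℝ → ℝ)
    (hGx : ∀ t ∈ Icc (0:ℝ) T, ∀ x ∈ Icc (0:ℝ) ℓ,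
      HasDerivWithinAt
        (fun y => Lam (s₀ y t) * k₁ y * sx y t + lw (s₀ y t) * k₁ y * px y t)
        (Gx x t) (Icc 0 ℓ) x)
    (hpar : ∀ t ∈ Icc (0:ℝ) T, ∀ x ∈ Ioo (0:ℝ) ℓ,
      φ x * st x t = Gx x t - b (s₀ x t) * Qh x t)
    (A : ℝ → ℝ → ℝ)
    (hA : ∀ x t : ℝ, A x t = deriv b (s₀ x t) *
      ((∫ ς in (0:ℝ)..x, Qh ς t) +
        (qℓ t - q₀ t -
          ∫ η in (0:ℝ)..ℓ, (1 / (lam (s₀ η t) * k₁ η)) * ∫ ς in (0:ℝ)..η, Qh ς t) /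
          (∫ η in (0:ℝ)..ℓ, 1 / (lam (s₀ η t) * k₁ η)))) :
    ∀ t ∈ Icc (0:ℝ) T, ∀ x₁ ∈ Ioo (0:ℝ) ℓ,
      HasDerivWithinAt (fun y => Lam (s₀ y t) * k₁ y * sx y t)
        (φ x₁ * st x₁ t - A x₁ t * sx x₁ t) (Icc 0 ℓ) x₁ := by
  intro t ht x₁ hx₁
  have hx₁' : x₁ ∈ Icc (0:ℝ) ℓ := Ioo_subset_Icc_self hx₁
  have hQc : ContinuousOn (fun x => Qh x t) (Icc 0 ℓ) :=
    hQh.comp (continuous_id.prodMk continuous_const).continuousOn fun x hx => ⟨hx, ht⟩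
  have hflux : lam (s₀ x₁ t) * k₁ x₁ * px x₁ t = (∫ ς in (0:ℝ)..x₁, Qh ς t) +
      (qℓ t - q₀ t - ∫ η in (0:ℝ)..ℓ, 1 / (lam (s₀ η t) * k₁ η) * ∫ ς in (0:ℝ)..η, Qh ς t) /
        ∫ η in (0:ℝ)..ℓ, 1 / (lam (s₀ η t) * k₁ η) := by
    rw [← hbc0 t ht, ← hbcl t ht]
    exact flux_eq_of_hasDerivWithinAt hl
      ((hlam.comp_continuousOn fun x hx => (hsx t ht x hx).continuousWithinAt).mul hk₁c)
      (fun x hx => mul_pos (hc₁.trans_le (hlampos _)) (hC₀.trans_le (hk₁ x hx)))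
      (hpx t ht) (hell t ht) hQc hx₁'
  have hlw : ∀ y, lw (s₀ y t) * k₁ y * px y t = b (s₀ y t) * (lam (s₀ y t) * k₁ y * px y t) :=
    fun y => by
      rw [hbdef]
      field_simp [(hc₁.trans_le (hlampos (s₀ y t))).ne']
  have hGx' := hGx t ht x₁ hx₁'
  simp only [hlw] at hGx'
  convert hGx'.of_add_comp_mul (hsx t ht x₁ hx₁')
    ((hb.differentiable one_ne_zero _).hasDerivAt) (hell t ht x₁ hx₁') using 1
  rw [hA, ← hflux, hpar t ht x₁ hx₁]
  ring

theorem statement7 (ℓ T : ℝ) (hl : 0 < ℓ) (hT : 0 < T)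
    (k₁ : ℝ → ℝ) (hk₁c : ContinuousOn k₁ (Icc 0 ℓ))
    (C₀ : ℝ) (hC₀ : 0 < C₀) (hk₁ : ∀ x ∈ Icc (0:ℝ) ℓ, C₀ ≤ k₁ x)
    (φ : ℝ → ℝ)
    (lam lw Lam : ℝ → ℝ) (hlam : Continuous lam)
    (c₁ : ℝ) (hc₁ : 0 < c₁) (hlampos : ∀ η : ℝ, c₁ ≤ lam η)
    (b : ℝ → ℝ) (hbdef : ∀ s : ℝ, b s = lw s / lam s) (hb : ContDiff ℝ 1 b)
    (Qh : ℝ → ℝ → ℝ)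
    (hQh : ContinuousOn (fun q : ℝ × ℝ => Qh q.1 q.2) (Icc 0 ℓ ×ˢ Icc 0 T))
    (q₀ qℓ : ℝ → ℝ)
    (p₀ s₀ px sx st : ℝ → ℝ → ℝ)
    (hpx : ∀ t ∈ Icc (0:ℝ) T, ∀ x ∈ Icc (0:ℝ) ℓ,
      HasDerivWithinAt (fun y => p₀ y t) (px x t) (Icc 0 ℓ) x)
    (hpxc : ∀ t ∈ Icc (0:ℝ) T, ContinuousOn (fun x => px x t) (Icc 0 ℓ))
    (hsx : ∀ t ∈ Icc (0:ℝ) T, ∀ x ∈ Icc (0:ℝ) ℓ,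
      HasDerivWithinAt (fun y => s₀ y t) (sx x t) (Icc 0 ℓ) x)
    (hsxc : ∀ t ∈ Icc (0:ℝ) T, ContinuousOn (fun x => sx x t) (Icc 0 ℓ))
    (hst : ∀ t ∈ Icc (0:ℝ) T, ∀ x ∈ Icc (0:ℝ) ℓ,
      HasDerivWithinAt (fun τ => s₀ x τ) (st x t) (Icc 0 T) t)
    (hell : ∀ t ∈ Icc (0:ℝ) T, ∀ x ∈ Icc (0:ℝ) ℓ,
      HasDerivWithinAt (fun y => lam (s₀ y t) * k₁ y * px y t) (Qh x t) (Icc 0 ℓ) x)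
    (hbc0 : ∀ t ∈ Icc (0:ℝ) T, p₀ 0 t = q₀ t)
    (hbcl : ∀ t ∈ Icc (0:ℝ) T, p₀ ℓ t = qℓ t)
    (Gx : ℝ → ℝ → ℝ)
    (hGx : ∀ t ∈ Icc (0:ℝ) T, ∀ x ∈ Icc (0:ℝ) ℓ,
      HasDerivWithinAt
        (fun y => Lam (s₀ y t) * k₁ y * sx y t + lw (s₀ y t) * k₁ y * px y t)
        (Gx x t) (Icc 0 ℓ) x)
    (hpar : ∀ t ∈ Icc (0:ℝ) T, ∀ x ∈ Ioo (0:ℝ) ℓ,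
      φ x * st x t = Gx x t - b (s₀ x t) * Qh x t)
    (A : ℝ → ℝ → ℝ)
    (hA : ∀ x t : ℝ, A x t = deriv b (s₀ x t) *
      ((∫ ς in (0:ℝ)..x, Qh ς t) +
        (qℓ t - q₀ t -
          ∫ η in (0:ℝ)..ℓ, (1 / (lam (s₀ η t) * k₁ η)) * ∫ ς in (0:ℝ)..η, Qh ς t) /
          (∫ η in (0:ℝ)..ℓ, 1 / (lam (s₀ η t) * k₁ η)))) :
    ∀ t ∈ Icc (0:ℝ) T, ∀ x₁ ∈ Ioo (0:ℝ) ℓ,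
      HasDerivWithinAt (fun y => Lam (s₀ y t) * k₁ y * sx y t)
        (φ x₁ * st x₁ t - A x₁ t * sx x₁ t) (Icc 0 ℓ) x₁ :=
  statement7_general ℓ T hl k₁ hk₁c C₀ hC₀ hk₁ φ lam lw Lam hlam c₁ hc₁ hlampos b hbdef hb Qh hQh q₀
    qℓ p₀ s₀ px sx st hpx hsx hell hbc0 hbcl Gx hGx hpar A hA
end

section
/- Let ℓ, T > 0 and let φ : [0,ℓ] → ℝ be continuous with φ(x) ≥ c₀ for some c₀ > 0. Let D, A₁, A₃ : [0,ℓ] × [0,T] → ℝ and A₂ : [0,ℓ] × [0,ℓ] × [0,T] → ℝ be continuous, with D(x,t) ≥ c for some c > 0. Let s : [0,ℓ] × [0,T] → ℝ be continuous such that the partial derivatives ∂_t s and ∂_x s exist and are continuous on [0,ℓ] × [0,T], the flux G(x,t) := D(x,t) ∂_x s(x,t) + A₁(x,t) s(x,t) has a continuous partial derivative ∂_x G on [0,ℓ] × [0,T], and such that for every (x,t) ∈ (0,ℓ) × (0,T]: φ(x) ∂_t s(x,t) = ∂_x G(x,t) + ∫_0^ℓ A₂(x,η,t) s(η,t) dη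 + A₃(x,t) s(x,t), with s(0,t) = s(ℓ,t) = 0 for every t ∈ [0,T] and s(x,0) = 0 for every x ∈ [0,ℓ]. Then s is identically zero on [0,ℓ] × [0,T]. -/
/-!
The weighted energy `E t = ∫₀^ℓ φ x * s x t ^ 2 dx` satisfies `E' ≤ K * E`: after substituting the
equation into `E' = ∫ 2 s (φ ∂ₜs)`, integration by parts against the Dirichlet data turns the
flux term into `-2 ∫ ∂ₓs (D ∂ₓs + A₁ s)`, which the coercivity `D ≥ c` and Young's inequality bound
by a multiple of `∫ s²`; the nonlocal and zeroth-order terms are bounded the same way, and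
`∫ s² ≤ E / c₀`. Since `E 0 = 0`, Grönwall's argument gives `E ≡ 0`, hence `s ≡ 0`.
-/

open Set Function MeasureTheory
open scoped Interval

theorem neg_mul_flux_le {c d M α p q : ℝ} (hc : 0 < c) (hd : c ≤ d) (hα : |α| ≤ M) :
    -(p * (d * p + α * q)) ≤ M ^ 2 / (4 * c) * q ^ 2 := by
  rw [div_mul_eq_mul_div, le_div_iff₀ (by positivity)]
  have h1 : -(α * (p * q)) ≤ M * (|p| * |q|) := by
    calc -(α * (p * q)) ≤ |α| * (|p| * |q|) := by
          rw [← abs_mul, ← abs_mul]; exact neg_le_abs _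
      _ ≤ M * (|p| * |q|) := by gcongr
  have h2 := sq_nonneg (2 * c * |p| - M * |q|)
  rw [sub_sq, mul_pow, mul_pow, mul_pow, sq_abs, sq_abs] at h2
  nlinarith [mul_le_mul_of_nonneg_left h1 hc.le,
    mul_le_mul_of_nonneg_left (mul_le_mul_of_nonneg_right hd (sq_nonneg p)) hc.le]

theorem mul_mul_le_of_abs_le {k M p q : ℝ} (hk : |k| ≤ M) :
    p * (k * q) ≤ M / 2 * (p ^ 2 + q ^ 2) := by
  have h1 : p * (k * q) ≤ M * (|p| * |q|) := by
    calc p * (k * q) ≤ |k| * (|p| * |q|) := by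
          rw [← abs_mul, ← abs_mul]; exact (le_of_eq (by ring)).trans (le_abs_self _)
      _ ≤ M * (|p| * |q|) := by gcongr
  nlinarith [sq_nonneg (|p| - |q|), sq_abs p, sq_abs q, (abs_nonneg k).trans hk]

theorem nonpos_of_hasDerivAt_le_mul_self {E E' : ℝ → ℝ} {K a b : ℝ}
    (hE : ContinuousOn E (Icc a b)) (hE' : ∀ t ∈ Ioo a b, HasDerivAt E (E' t) t)
    (hbound : ∀ t ∈ Ioo a b, E' t ≤ K * E t) (ha : E a ≤ 0) :
    ∀ t ∈ Icc a b, E t ≤ 0 := by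
  have hanti : AntitoneOn (fun t => E t * Real.exp (-K * t)) (Icc a b) := by
    refine antitoneOn_of_hasDerivWithinAt_nonpos (convex_Icc a b)
      (f' := fun t => (E' t - K * E t) * Real.exp (-K * t))
      (hE.mul (by fun_prop)) (fun t ht => ?_) (fun t ht => ?_)
    · rw [interior_Icc] at ht
      refine (((hE' t ht).mul ((hasDerivAt_id t).const_mul (-K)).exp).congr_deriv ?_)
        |>.hasDerivWithinAt
      simp only [id, mul_one]; ring
    · rw [interior_Icc] at ht
      exact mul_nonpos_of_nonpos_of_nonneg (by linarith [hbound t ht]) (Real.exp_pos _).le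
  intro t ht
  have h : E t * Real.exp (-K * t) ≤ E a * Real.exp (-K * a) :=
    hanti (left_mem_Icc.2 (ht.1.trans ht.2)) ht ht.1
  exact nonpos_of_mul_nonpos_left
    (h.trans (mul_nonpos_of_nonpos_of_nonneg ha (Real.exp_pos _).le)) (Real.exp_pos _)

theorem ContinuousOn.aestronglyMeasurable_uIoc {f : ℝ → ℝ} {a b : ℝ} (hab : a ≤ b)
    (hf : ContinuousOn f (Icc a b)) : AEStronglyMeasurable f (volume.restrict (Ι a b)) := by
  rw [uIoc_of_le hab]
  exact (hf.mono Ioc_subset_Icc_self).aestronglyMeasurable measurableSet_Ioc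

theorem continuousOn_intervalIntegral_of_continuousOn_uncurry {X : Type*} [TopologicalSpace X]
    [FirstCountableTopology X]
    {F : ℝ → X → ℝ} {a b : ℝ} {K : Set X} (hab : a ≤ b) (hK : IsCompact K)
    (hF : ContinuousOn (uncurry F) (Icc a b ×ˢ K)) :
    ContinuousOn (fun τ => ∫ x in a..b, F x τ) K := by
  obtain ⟨C, hC⟩ := (isCompact_Icc.prod hK).exists_bound_of_continuousOn hF
  have hIoc : Ι a b ⊆ Icc a b := by rw [uIoc_of_le hab]; exact Ioc_subset_Icc_self
  intro τ hτ
  refine intervalIntegral.continuousWithinAt_of_dominated_interval (bound := fun _ => C)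
    ?_ ?_ intervalIntegrable_const (ae_of_all _ fun x hx => ?_)
  · filter_upwards [self_mem_nhdsWithin] with σ hσ
    exact (hF.uncurry_right σ hσ).aestronglyMeasurable_uIoc hab
  · filter_upwards [self_mem_nhdsWithin] with σ hσ
    exact ae_of_all _ fun x hx => hC (x, σ) ⟨hIoc hx, hσ⟩
  · exact hF.uncurry_left x (hIoc hx) τ hτ

theorem hasDerivAt_intervalIntegral_of_continuousOn_uncurry {F F' : ℝ → ℝ → ℝ} {a b c d t : ℝ}
    (hab : a ≤ b) (hF : ContinuousOn (uncurry F) (Icc a b ×ˢ Icc c d))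
    (hF' : ContinuousOn (uncurry F') (Icc a b ×ˢ Icc c d))
    (hderiv : ∀ x ∈ Icc a b, ∀ τ ∈ Ioo c d, HasDerivAt (F x) (F' x τ) τ) (ht : t ∈ Ioo c d) :
    HasDerivAt (fun τ => ∫ x in a..b, F x τ) (∫ x in a..b, F' x t) t := by
  obtain ⟨C, hC⟩ := (isCompact_Icc.prod isCompact_Icc).exists_bound_of_continuousOn hF'
  have hIoc : Ι a b ⊆ Icc a b := by rw [uIoc_of_le hab]; exact Ioc_subset_Icc_self
  have hIcc : ∀ τ ∈ Ioo c d, τ ∈ Icc c d := fun τ hτ => Ioo_subset_Icc_self hτ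
  refine (intervalIntegral.hasDerivAt_integral_of_dominated_loc_of_deriv_le
    (F := fun τ x => F x τ) (F' := fun τ x => F' x τ) (bound := fun _ => C)
    (isOpen_Ioo.mem_nhds ht) ?_ ?_ ?_ ?_ intervalIntegrable_const ?_).2
  · filter_upwards [isOpen_Ioo.mem_nhds ht] with τ hτ
    exact (hF.uncurry_right τ (hIcc τ hτ)).aestronglyMeasurable_uIoc hab
  · exact (hF.uncurry_right t (hIcc t ht)).intervalIntegrable_of_Icc hab
  · exact (hF'.uncurry_right t (hIcc t ht)).aestronglyMeasurable_uIoc hab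
  · exact ae_of_all _ fun x hx τ hτ => hC (x, τ) ⟨hIoc hx, hIcc τ hτ⟩
  · exact ae_of_all _ fun x hx τ hτ => hderiv x (hIoc hx) τ hτ

theorem integral_mul_flux_deriv_le {a b c M : ℝ} {u u' d α G' : ℝ → ℝ} (hab : a ≤ b)
    (hc : 0 < c) (hu : ∀ x ∈ Icc a b, HasDerivWithinAt u (u' x) (Icc a b) x)
    (hu' : ContinuousOn u' (Icc a b))
    (hG : ∀ x ∈ Icc a b, HasDerivWithinAt (fun y => d y * u' y + α y * u y) (G' x) (Icc a b) x)
    (hG' : ContinuousOn G' (Icc a b)) (hd : ∀ x ∈ Icc a b, c ≤ d x)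
    (hα : ∀ x ∈ Icc a b, |α x| ≤ M) (hua : u a = 0) (hub : u b = 0) :
    ∫ x in a..b, u x * G' x ≤ M ^ 2 / (4 * c) * ∫ x in a..b, u x ^ 2 := by
  have hucont : ContinuousOn u (Icc a b) := fun x hx => (hu x hx).continuousWithinAt
  have hGcont : ContinuousOn (fun y => d y * u' y + α y * u y) (Icc a b) :=
    fun x hx => (hG x hx).continuousWithinAt
  have hu'int := hu'.intervalIntegrable_of_Icc (μ := volume) hab
  rw [← uIcc_of_le hab] at hu hG hG'
  calc ∫ x in a..b, u x * G' x
      = ∫ x in a..b, -(u' x * (d x * u' x + α x * u x)) := by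
        rw [intervalIntegral.integral_mul_deriv_eq_deriv_mul_of_hasDerivWithinAt hu hG hu'int
          hG'.intervalIntegrable, hua, hub, intervalIntegral.integral_neg]
        ring
    _ ≤ ∫ x in a..b, M ^ 2 / (4 * c) * u x ^ 2 :=
        intervalIntegral.integral_mono_on hab
          ((hu'.mul hGcont).neg.intervalIntegrable_of_Icc hab)
          ((continuousOn_const.mul (hucont.pow 2)).intervalIntegrable_of_Icc hab)
          fun x hx => neg_mul_flux_le hc (hd x hx) (hα x hx)
    _ = M ^ 2 / (4 * c) * ∫ x in a..b, u x ^ 2 := intervalIntegral.integral_const_mul _ _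

theorem continuousOn_intervalIntegral_kernel_mul {a b : ℝ} {k : ℝ → ℝ → ℝ} {u : ℝ → ℝ}
    (hab : a ≤ b) (hk : ContinuousOn (uncurry k) (Icc a b ×ˢ Icc a b))
    (hu : ContinuousOn u (Icc a b)) :
    ContinuousOn (fun x => ∫ y in a..b, k x y * u y) (Icc a b) :=
  continuousOn_intervalIntegral_of_continuousOn_uncurry hab isCompact_Icc
    ((hk.comp continuous_swap.continuousOn fun _ hq => ⟨hq.2, hq.1⟩).mul
      (hu.comp continuousOn_fst fun _ hq => hq.1))

theorem integral_mul_integral_kernel_le {a b M : ℝ} {k : ℝ → ℝ → ℝ} {u : ℝ → ℝ} (hab : a ≤ b)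
    (hk : ContinuousOn (uncurry k) (Icc a b ×ˢ Icc a b))
    (hkM : ∀ x ∈ Icc a b, ∀ y ∈ Icc a b, |k x y| ≤ M) (hu : ContinuousOn u (Icc a b)) :
    ∫ x in a..b, u x * ∫ y in a..b, k x y * u y ≤ M * (b - a) * ∫ x in a..b, u x ^ 2 := by
  have hu2 : IntervalIntegrable (fun x => u x ^ 2) volume a b :=
    (hu.pow 2).intervalIntegrable_of_Icc hab
  have hinner : ∀ x ∈ Icc a b,
      u x * ∫ y in a..b, k x y * u y ≤ M / 2 * ((b - a) * u x ^ 2 + ∫ y in a..b, u y ^ 2) := by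
    intro x hx
    rw [← intervalIntegral.integral_const_mul]
    calc ∫ y in a..b, u x * (k x y * u y)
        ≤ ∫ y in a..b, M / 2 * (u x ^ 2 + u y ^ 2) :=
          intervalIntegral.integral_mono_on hab
            ((continuousOn_const.mul ((hk.uncurry_left x hx).mul hu)).intervalIntegrable_of_Icc hab)
            ((continuousOn_const.mul (continuousOn_const.add (hu.pow 2))).intervalIntegrable_of_Icc
              hab)
            fun y hy => mul_mul_le_of_abs_le (hkM x hx y hy)
      _ = M / 2 * ((b - a) * u x ^ 2 + ∫ y in a..b, u y ^ 2) := by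
          rw [intervalIntegral.integral_const_mul, intervalIntegral.integral_add
            intervalIntegrable_const hu2, intervalIntegral.integral_const, smul_eq_mul]
  have hN := continuousOn_intervalIntegral_kernel_mul hab hk hu
  calc ∫ x in a..b, u x * ∫ y in a..b, k x y * u y
      ≤ ∫ x in a..b, M / 2 * ((b - a) * u x ^ 2 + ∫ y in a..b, u y ^ 2) :=
        intervalIntegral.integral_mono_on hab ((hu.mul hN).intervalIntegrable_of_Icc hab)
          ((continuousOn_const.mul ((continuousOn_const.mul (hu.pow 2)).add
            continuousOn_const)).intervalIntegrable_of_Icc hab) hinner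
    _ = M * (b - a) * ∫ x in a..b, u x ^ 2 := by
        rw [intervalIntegral.integral_const_mul, intervalIntegral.integral_add
          (hu2.const_mul _) intervalIntegrable_const, intervalIntegral.integral_const_mul,
          intervalIntegral.integral_const, smul_eq_mul]
        ring

theorem integral_two_mul_le_of_eq_flux_deriv_add_nonlocal {a b c M₁ M₂ M₃ : ℝ}
    {u u' v d α β G' : ℝ → ℝ} {k : ℝ → ℝ → ℝ} (hab : a ≤ b) (hc : 0 < c)
    (hu : ∀ x ∈ Icc a b, HasDerivWithinAt u (u' x) (Icc a b) x)
    (hu' : ContinuousOn u' (Icc a b))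
    (hG : ∀ x ∈ Icc a b, HasDerivWithinAt (fun y => d y * u' y + α y * u y) (G' x) (Icc a b) x)
    (hG' : ContinuousOn G' (Icc a b)) (hd : ∀ x ∈ Icc a b, c ≤ d x)
    (hα : ∀ x ∈ Icc a b, |α x| ≤ M₁) (hk : ContinuousOn (uncurry k) (Icc a b ×ˢ Icc a b))
    (hkM : ∀ x ∈ Icc a b, ∀ y ∈ Icc a b, |k x y| ≤ M₂) (hβ : ContinuousOn β (Icc a b))
    (hβM : ∀ x ∈ Icc a b, |β x| ≤ M₃) (hua : u a = 0) (hub : u b = 0)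
    (hv : ∀ x ∈ Ioo a b, v x = G' x + (∫ y in a..b, k x y * u y) + β x * u x) :
    ∫ x in a..b, 2 * u x * v x
      ≤ 2 * (M₁ ^ 2 / (4 * c) + M₂ * (b - a) + M₃) * ∫ x in a..b, u x ^ 2 := by
  have hucont : ContinuousOn u (Icc a b) := fun x hx => (hu x hx).continuousWithinAt
  have hN := continuousOn_intervalIntegral_kernel_mul hab hk hucont
  have hint : ∀ {f : ℝ → ℝ}, ContinuousOn f (Icc a b) → IntervalIntegrable f volume a b :=
    fun hf => hf.intervalIntegrable_of_Icc hab
  have i₁ : IntervalIntegrable (fun x => 2 * (u x * G' x)) volume a b :=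
    hint (continuousOn_const.mul (hucont.mul hG'))
  have i₂ : IntervalIntegrable (fun x => 2 * (u x * ∫ y in a..b, k x y * u y)) volume a b :=
    hint (continuousOn_const.mul (hucont.mul hN))
  have i₃ : IntervalIntegrable (fun x => 2 * (β x * u x ^ 2)) volume a b :=
    hint (continuousOn_const.mul (hβ.mul (hucont.pow 2)))
  have hsplit : ∫ x in a..b, 2 * u x * v x = 2 * (∫ x in a..b, u x * G' x)
      + 2 * (∫ x in a..b, u x * ∫ y in a..b, k x y * u y)
      + 2 * ∫ x in a..b, β x * u x ^ 2 := by
    calc ∫ x in a..b, 2 * u x * v x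
        = ∫ x in a..b, 2 * (u x * G' x) + 2 * (u x * ∫ y in a..b, k x y * u y)
            + 2 * (β x * u x ^ 2) := by
          refine intervalIntegral.integral_congr_ae ?_
          filter_upwards [Measure.ae_ne volume b] with x hxb hx
          rw [uIoc_of_le hab] at hx
          rw [hv x ⟨hx.1, lt_of_le_of_ne hx.2 hxb⟩]
          ring
      _ = _ := by
          rw [intervalIntegral.integral_add (i₁.add i₂) i₃, intervalIntegral.integral_add i₁ i₂,
            intervalIntegral.integral_const_mul, intervalIntegral.integral_const_mul,
            intervalIntegral.integral_const_mul]
  have hβint : ∫ x in a..b, β x * u x ^ 2 ≤ M₃ * ∫ x in a..b, u x ^ 2 := by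
    rw [← intervalIntegral.integral_const_mul]
    refine intervalIntegral.integral_mono_on hab (hint (hβ.mul (hucont.pow 2)))
      (hint (continuousOn_const.mul (hucont.pow 2))) fun x hx => ?_
    exact mul_le_mul_of_nonneg_right ((le_abs_self _).trans (hβM x hx)) (sq_nonneg _)
  have hdiff := integral_mul_flux_deriv_le hab hc hu hu' hG hG' hd hα hua hub
  have hnonloc := integral_mul_integral_kernel_le hab hk hkM hucont
  rw [hsplit]
  linarith

theorem mul_integral_sq_le_integral_mul_sq {a b c₀ : ℝ} {φ u : ℝ → ℝ} (hab : a ≤ b)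
    (hφ : ∀ x ∈ Icc a b, c₀ ≤ φ x) (hφc : ContinuousOn φ (Icc a b))
    (hu : ContinuousOn u (Icc a b)) :
    c₀ * ∫ x in a..b, u x ^ 2 ≤ ∫ x in a..b, φ x * u x ^ 2 := by
  rw [← intervalIntegral.integral_const_mul]
  exact intervalIntegral.integral_mono_on hab
    ((continuousOn_const.mul (hu.pow 2)).intervalIntegrable_of_Icc hab)
    ((hφc.mul (hu.pow 2)).intervalIntegrable_of_Icc hab)
    fun x hx => mul_le_mul_of_nonneg_right (hφ x hx) (sq_nonneg _)

noncomputable def weightedEnergy (φ : ℝ → ℝ) (s : ℝ → ℝ → ℝ) (a b t : ℝ) : ℝ :=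
  ∫ x in a..b, φ x * s x t ^ 2

theorem continuousOn_weightedEnergy {φ : ℝ → ℝ} {s : ℝ → ℝ → ℝ} {a b c d : ℝ} (hab : a ≤ b)
    (hφ : ContinuousOn φ (Icc a b)) (hs : ContinuousOn (uncurry s) (Icc a b ×ˢ Icc c d)) :
    ContinuousOn (weightedEnergy φ s a b) (Icc c d) :=
  continuousOn_intervalIntegral_of_continuousOn_uncurry hab isCompact_Icc
    ((hφ.comp continuousOn_fst fun _ hq => hq.1).mul (hs.pow 2))

theorem hasDerivAt_weightedEnergy {φ : ℝ → ℝ} {s st : ℝ → ℝ → ℝ} {a b c d t : ℝ} (hab : a ≤ b)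
    (hφ : ContinuousOn φ (Icc a b)) (hs : ContinuousOn (uncurry s) (Icc a b ×ˢ Icc c d))
    (hst : ∀ x ∈ Icc a b, ∀ τ ∈ Icc c d, HasDerivWithinAt (s x) (st x τ) (Icc c d) τ)
    (hstc : ContinuousOn (uncurry st) (Icc a b ×ˢ Icc c d)) (ht : t ∈ Ioo c d) :
    HasDerivAt (weightedEnergy φ s a b) (∫ x in a..b, φ x * (2 * s x t * st x t)) t := by
  have hφ' : ContinuousOn (fun q : ℝ × ℝ => φ q.1) (Icc a b ×ˢ Icc c d) :=
    hφ.comp continuousOn_fst fun _ hq => hq.1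
  refine hasDerivAt_intervalIntegral_of_continuousOn_uncurry (F := fun x τ => φ x * s x τ ^ 2)
    (F' := fun x τ => φ x * (2 * s x τ * st x τ)) hab (hφ'.mul (hs.pow 2))
    (hφ'.mul ((continuousOn_const.mul hs).mul hstc)) (fun x hx τ hτ => ?_) ht
  have hsτ := (hst x hx τ (Ioo_subset_Icc_self hτ)).hasDerivAt (Icc_mem_nhds hτ.1 hτ.2)
  exact ((hsτ.pow 2).const_mul (φ x)).congr_deriv (by ring)

theorem integral_energy_deriv_le {a b c c₀ M₁ M₂ M₃ : ℝ} {φ u u' ut d α β G' : ℝ → ℝ}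
    {k : ℝ → ℝ → ℝ} (hab : a ≤ b) (hc : 0 < c) (hc₀ : 0 < c₀)
    (hφ : ∀ x ∈ Icc a b, c₀ ≤ φ x) (hφc : ContinuousOn φ (Icc a b))
    (hu : ∀ x ∈ Icc a b, HasDerivWithinAt u (u' x) (Icc a b) x)
    (hu' : ContinuousOn u' (Icc a b))
    (hG : ∀ x ∈ Icc a b, HasDerivWithinAt (fun y => d y * u' y + α y * u y) (G' x) (Icc a b) x)
    (hG' : ContinuousOn G' (Icc a b)) (hd : ∀ x ∈ Icc a b, c ≤ d x)
    (hα : ∀ x ∈ Icc a b, |α x| ≤ M₁) (hk : ContinuousOn (uncurry k) (Icc a b ×ˢ Icc a b))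
    (hkM : ∀ x ∈ Icc a b, ∀ y ∈ Icc a b, |k x y| ≤ M₂) (hβ : ContinuousOn β (Icc a b))
    (hβM : ∀ x ∈ Icc a b, |β x| ≤ M₃) (hua : u a = 0) (hub : u b = 0)
    (heq : ∀ x ∈ Ioo a b, φ x * ut x = G' x + (∫ y in a..b, k x y * u y) + β x * u x) :
    ∫ x in a..b, φ x * (2 * u x * ut x)
      ≤ 2 * (M₁ ^ 2 / (4 * c) + M₂ * (b - a) + M₃) / c₀ * ∫ x in a..b, φ x * u x ^ 2 := by
  have ha : a ∈ Icc a b := left_mem_Icc.2 hab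
  have hK : 0 ≤ 2 * (M₁ ^ 2 / (4 * c) + M₂ * (b - a) + M₃) := by
    have := (abs_nonneg _).trans (hkM a ha a ha)
    have := (abs_nonneg _).trans (hβM a ha)
    have : 0 ≤ b - a := sub_nonneg.2 hab
    positivity
  have hweight := mul_integral_sq_le_integral_mul_sq hab hφ hφc
    (fun x hx => (hu x hx).continuousWithinAt)
  calc ∫ x in a..b, φ x * (2 * u x * ut x) = ∫ x in a..b, 2 * u x * (φ x * ut x) := by
        congr 1; ext x; ring
    _ ≤ 2 * (M₁ ^ 2 / (4 * c) + M₂ * (b - a) + M₃) * ∫ x in a..b, u x ^ 2 :=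
        integral_two_mul_le_of_eq_flux_deriv_add_nonlocal hab hc hu hu' hG hG' hd hα hk hkM hβ hβM
          hua hub heq
    _ ≤ _ := by
        rw [div_mul_eq_mul_div, le_div_iff₀ hc₀, mul_assoc, mul_comm _ c₀]
        exact mul_le_mul_of_nonneg_left hweight hK

theorem eqOn_zero_of_integral_mul_sq_nonpos {a b c₀ : ℝ} {φ u : ℝ → ℝ} (hab : a < b)
    (hc₀ : 0 < c₀) (hφ : ∀ x ∈ Icc a b, c₀ ≤ φ x) (hφc : ContinuousOn φ (Icc a b))
    (hu : ContinuousOn u (Icc a b)) (h : ∫ x in a..b, φ x * u x ^ 2 ≤ 0) :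
    EqOn u 0 (Icc a b) := by
  have hJ : ∫ x in a..b, u x ^ 2 = 0 :=
    le_antisymm (nonpos_of_mul_nonpos_right
        ((mul_integral_sq_le_integral_mul_sq hab.le hφ hφc hu).trans h) hc₀)
      (intervalIntegral.integral_nonneg hab.le fun x _ => sq_nonneg (u x))
  have hae : (fun x => u x ^ 2) =ᵐ[volume.restrict (Icc a b)] 0 := by
    rw [← Measure.restrict_congr_set Ioc_ae_eq_Icc]
    exact (intervalIntegral.integral_eq_zero_iff_of_le_of_nonneg_ae hab.le
      (ae_of_all _ fun x => sq_nonneg (u x)) ((hu.pow 2).intervalIntegrable_of_Icc hab.le)).1 hJ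
  intro x hx
  simpa using Measure.eqOn_Icc_of_ae_eq volume hab.ne hae (hu.pow 2) continuousOn_const hx

theorem statement9_general (ℓ T : ℝ) (hl : 0 < ℓ)
    (φ : ℝ → ℝ) (hφc : ContinuousOn φ (Icc 0 ℓ))
    (c₀ : ℝ) (hc₀ : 0 < c₀) (hφ : ∀ x ∈ Icc (0:ℝ) ℓ, c₀ ≤ φ x)
    (D A₁ A₃ : ℝ → ℝ → ℝ) (A₂ : ℝ → ℝ → ℝ → ℝ)
    (hA₁c : ContinuousOn (fun q : ℝ × ℝ => A₁ q.1 q.2) (Icc 0 ℓ ×ˢ Icc 0 T))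
    (hA₃c : ContinuousOn (fun q : ℝ × ℝ => A₃ q.1 q.2) (Icc 0 ℓ ×ˢ Icc 0 T))
    (hA₂c : ContinuousOn (fun q : ℝ × ℝ × ℝ => A₂ q.1 q.2.1 q.2.2)
      (Icc 0 ℓ ×ˢ Icc 0 ℓ ×ˢ Icc 0 T))
    (c : ℝ) (hc : 0 < c)
    (hDpos : ∀ x ∈ Icc (0:ℝ) ℓ, ∀ t ∈ Icc (0:ℝ) T, c ≤ D x t)
    (s st sx Gx : ℝ → ℝ → ℝ)
    (hsc : ContinuousOn (fun q : ℝ × ℝ => s q.1 q.2) (Icc 0 ℓ ×ˢ Icc 0 T))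
    (hst : ∀ x ∈ Icc (0:ℝ) ℓ, ∀ t ∈ Icc (0:ℝ) T,
      HasDerivWithinAt (fun τ => s x τ) (st x t) (Icc 0 T) t)
    (hstc : ContinuousOn (fun q : ℝ × ℝ => st q.1 q.2) (Icc 0 ℓ ×ˢ Icc 0 T))
    (hsx : ∀ x ∈ Icc (0:ℝ) ℓ, ∀ t ∈ Icc (0:ℝ) T,
      HasDerivWithinAt (fun y => s y t) (sx x t) (Icc 0 ℓ) x)
    (hsxc : ContinuousOn (fun q : ℝ × ℝ => sx q.1 q.2) (Icc 0 ℓ ×ˢ Icc 0 T))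
    (hGx : ∀ x ∈ Icc (0:ℝ) ℓ, ∀ t ∈ Icc (0:ℝ) T,
      HasDerivWithinAt (fun y => D y t * sx y t + A₁ y t * s y t) (Gx x t) (Icc 0 ℓ) x)
    (hGxc : ContinuousOn (fun q : ℝ × ℝ => Gx q.1 q.2) (Icc 0 ℓ ×ˢ Icc 0 T))
    (heq : ∀ x ∈ Ioo (0:ℝ) ℓ, ∀ t ∈ Ioc (0:ℝ) T,
      φ x * st x t = Gx x t + (∫ η in (0:ℝ)..ℓ, A₂ x η t * s η t) + A₃ x t * s x t)
    (hbc : ∀ t ∈ Icc (0:ℝ) T, s 0 t = 0 ∧ s ℓ t = 0)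
    (hic : ∀ x ∈ Icc (0:ℝ) ℓ, s x 0 = 0) :
    ∀ x ∈ Icc (0:ℝ) ℓ, ∀ t ∈ Icc (0:ℝ) T, s x t = 0 := by
  have hK : IsCompact (Icc (0:ℝ) ℓ ×ˢ Icc (0:ℝ) T) := isCompact_Icc.prod isCompact_Icc
  obtain ⟨M₁, hM₁⟩ := hK.exists_bound_of_continuousOn hA₁c
  obtain ⟨M₂, hM₂⟩ := (isCompact_Icc.prod hK).exists_bound_of_continuousOn hA₂c
  obtain ⟨M₃, hM₃⟩ := hK.exists_bound_of_continuousOn hA₃c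
  have hE0 : weightedEnergy φ s 0 ℓ 0 = 0 := by
    refine (intervalIntegral.integral_congr (g := 0) fun x hx => ?_).trans (by simp)
    rw [uIcc_of_le hl.le] at hx
    simp [hic x hx]
  have hE : ∀ t ∈ Icc (0:ℝ) T, weightedEnergy φ s 0 ℓ t ≤ 0 := by
    refine nonpos_of_hasDerivAt_le_mul_self
      (K := 2 * (M₁ ^ 2 / (4 * c) + M₂ * (ℓ - 0) + M₃) / c₀)
      (continuousOn_weightedEnergy hl.le hφc hsc)
      (fun t ht => hasDerivAt_weightedEnergy hl.le hφc hsc hst hstc ht) (fun t ht => ?_) hE0.le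
    have ht' := Ioo_subset_Icc_self ht
    have hA₂t : ContinuousOn (uncurry fun x y => A₂ x y t) (Icc 0 ℓ ×ˢ Icc 0 ℓ) :=
      hA₂c.comp (continuous_fst.prodMk (continuous_snd.prodMk continuous_const)).continuousOn
        fun _ hq => ⟨hq.1, hq.2, ht'⟩
    exact integral_energy_deriv_le hl.le hc hc₀ hφ hφc (fun x hx => hsx x hx t ht')
      (hsxc.uncurry_right (f := sx) t ht') (fun x hx => hGx x hx t ht')
      (hGxc.uncurry_right (f := Gx) t ht') (fun x hx => hDpos x hx t ht')
      (fun x hx => hM₁ (x, t) ⟨hx, ht'⟩) hA₂t (fun x hx y hy => hM₂ (x, y, t) ⟨hx, hy, ht'⟩)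
      (hA₃c.uncurry_right (f := A₃) t ht') (fun x hx => hM₃ (x, t) ⟨hx, ht'⟩)
      (hbc t ht').1 (hbc t ht').2 fun x hx => heq x hx t ⟨ht.1, ht.2.le⟩
  intro x hx t ht
  exact eqOn_zero_of_integral_mul_sq_nonpos hl hc₀ hφ hφc (hsc.uncurry_right (f := s) t ht)
    (hE t ht) hx

theorem statement9 (ℓ T : ℝ) (hl : 0 < ℓ) (hT : 0 < T)
    (φ : ℝ → ℝ) (hφc : ContinuousOn φ (Icc 0 ℓ))
    (c₀ : ℝ) (hc₀ : 0 < c₀) (hφ : ∀ x ∈ Icc (0:ℝ) ℓ, c₀ ≤ φ x)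
    (D A₁ A₃ : ℝ → ℝ → ℝ) (A₂ : ℝ → ℝ → ℝ → ℝ)
    (hDc : ContinuousOn (fun q : ℝ × ℝ => D q.1 q.2) (Icc 0 ℓ ×ˢ Icc 0 T))
    (hA₁c : ContinuousOn (fun q : ℝ × ℝ => A₁ q.1 q.2) (Icc 0 ℓ ×ˢ Icc 0 T))
    (hA₃c : ContinuousOn (fun q : ℝ × ℝ => A₃ q.1 q.2) (Icc 0 ℓ ×ˢ Icc 0 T))
    (hA₂c : ContinuousOn (fun q : ℝ × ℝ × ℝ => A₂ q.1 q.2.1 q.2.2)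
      (Icc 0 ℓ ×ˢ Icc 0 ℓ ×ˢ Icc 0 T))
    (c : ℝ) (hc : 0 < c)
    (hDpos : ∀ x ∈ Icc (0:ℝ) ℓ, ∀ t ∈ Icc (0:ℝ) T, c ≤ D x t)
    (s st sx Gx : ℝ → ℝ → ℝ)
    (hsc : ContinuousOn (fun q : ℝ × ℝ => s q.1 q.2) (Icc 0 ℓ ×ˢ Icc 0 T))
    (hst : ∀ x ∈ Icc (0:ℝ) ℓ, ∀ t ∈ Icc (0:ℝ) T,
      HasDerivWithinAt (fun τ => s x τ) (st x t) (Icc 0 T) t)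
    (hstc : ContinuousOn (fun q : ℝ × ℝ => st q.1 q.2) (Icc 0 ℓ ×ˢ Icc 0 T))
    (hsx : ∀ x ∈ Icc (0:ℝ) ℓ, ∀ t ∈ Icc (0:ℝ) T,
      HasDerivWithinAt (fun y => s y t) (sx x t) (Icc 0 ℓ) x)
    (hsxc : ContinuousOn (fun q : ℝ × ℝ => sx q.1 q.2) (Icc 0 ℓ ×ˢ Icc 0 T))
    (hGx : ∀ x ∈ Icc (0:ℝ) ℓ, ∀ t ∈ Icc (0:ℝ) T,
      HasDerivWithinAt (fun y => D y t * sx y t + A₁ y t * s y t) (Gx x t) (Icc 0 ℓ) x)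
    (hGxc : ContinuousOn (fun q : ℝ × ℝ => Gx q.1 q.2) (Icc 0 ℓ ×ˢ Icc 0 T))
    (heq : ∀ x ∈ Ioo (0:ℝ) ℓ, ∀ t ∈ Ioc (0:ℝ) T,
      φ x * st x t = Gx x t + (∫ η in (0:ℝ)..ℓ, A₂ x η t * s η t) + A₃ x t * s x t)
    (hbc : ∀ t ∈ Icc (0:ℝ) T, s 0 t = 0 ∧ s ℓ t = 0)
    (hic : ∀ x ∈ Icc (0:ℝ) ℓ, s x 0 = 0) :
    ∀ x ∈ Icc (0:ℝ) ℓ, ∀ t ∈ Icc (0:ℝ) T, s x t = 0 :=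
  statement9_general ℓ T hl φ hφc c₀ hc₀ hφ D A₁ A₃ A₂ hA₁c hA₃c hA₂c c hc hDpos s st sx Gx hsc hst
    hstc hsx hsxc hGx hGxc heq hbc hic
end
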